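/- There exists a constant C₃ > 0 (one may take C₃ = 8e²) such that for all continuous functions f, f' : [a,b] → ℝ with a < b, |exp(−∫_a^b e^{f(u)} du) − exp(−∫_a^b e^{f'(u)} du)| ≤ C₃ · sup_{u∈[a,b]} |f(u) − f'(u)|. -/
import Mathlib

open Real

lemma bw_key (A B M : ℝ) (hA : 0 ≤ A) (hAB : A ≤ B) (hB : B ≤ Real.exp M * A)
    (hM : 0 ≤ M) : |Real.exp (-A) - Real.exp (-B)| ≤ 2 * M := by
  have h1 : Real.exp (-B) ≤ Real.exp (-A) := Real.exp_le_exp.2 (by linarith)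
  rw [abs_of_nonneg (by linarith)]
  by_cases hM1 : M ≤ 1
  · have e1 : 1 - Real.exp (-(B - A)) ≤ B - A := by
      have := Real.add_one_le_exp (-(B - A)); linarith
    have e2 : Real.exp (-A) - Real.exp (-B) = Real.exp (-A) * (1 - Real.exp (-(B - A))) := by
      rw [mul_sub, mul_one, ← Real.exp_add]; ring_nf
    have hposA : 0 < Real.exp (-A) := Real.exp_pos _
    have e3 : A * Real.exp (-A) ≤ Real.exp (-1 : ℝ) := by
      have h := Real.add_one_le_exp (A - 1)
      have := mul_le_mul_of_nonneg_right h hposA.le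
      rw [← Real.exp_add] at this
      simp only [show A - 1 + -A = (-1 : ℝ) by ring] at this
      linarith
    have e4 : Real.exp M - 1 ≤ M * Real.exp M := by
      have h := Real.add_one_le_exp (-M)
      have hp : 0 < Real.exp M := Real.exp_pos _
      have := mul_le_mul_of_nonneg_right h hp.le
      rw [← Real.exp_add] at this
      simp only [show -M + M = (0 : ℝ) by ring, Real.exp_zero] at this
      nlinarith
    have e5 : Real.exp M * Real.exp (-1 : ℝ) ≤ 1 := by
      rw [← Real.exp_add]
      exact Real.exp_le_one_iff.2 (by linarith)
    have step1 : Real.exp (-A) - Real.exp (-B) ≤ Real.exp (-A) * (B - A) := by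
      rw [e2]; exact mul_le_mul_of_nonneg_left e1 hposA.le
    have step2 : Real.exp (-A) * (B - A) ≤ A * Real.exp (-A) * (Real.exp M - 1) := by
      have : B - A ≤ A * (Real.exp M - 1) := by nlinarith
      nlinarith
    have hEM1 : 0 ≤ Real.exp M - 1 := by
      have := Real.one_le_exp hM; linarith
    have step3 : A * Real.exp (-A) * (Real.exp M - 1) ≤ Real.exp (-1 : ℝ) * (Real.exp M - 1) :=
      mul_le_mul_of_nonneg_right e3 hEM1
    have hp : 0 < Real.exp M := Real.exp_pos _
    have hen : 0 < Real.exp (-1 : ℝ) := Real.exp_pos _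
    nlinarith
  · have h2 : Real.exp (-A) ≤ 1 := Real.exp_le_one_iff.2 (by linarith)
    have h3 : 0 < Real.exp (-B) := Real.exp_pos _
    linarith

theorem boltzmann_weight_lipschitz :
    ∃ C₃ : ℝ, 0 < C₃ ∧ ∀ (a b : ℝ), a < b → ∀ (f f' : ℝ → ℝ),
      Continuous f → Continuous f' →
      |Real.exp (-∫ u in a..b, Real.exp (f u)) -
          Real.exp (-∫ u in a..b, Real.exp (f' u))| ≤
        C₃ * ⨆ u : Set.Icc a b, |f u.1 - f' u.1| := by
  refine ⟨2, by norm_num, fun a b hab f f' hf hf' => ?_⟩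
  have hab' : a ≤ b := hab.le
  haveI : Nonempty (Set.Icc a b) := ⟨⟨a, le_refl a, hab'⟩⟩
  set M : ℝ := ⨆ u : Set.Icc a b, |f u.1 - f' u.1| with hMdef
  have hcont : Continuous fun u : Set.Icc a b => |f u.1 - f' u.1| :=
    ((hf.comp continuous_subtype_val).sub (hf'.comp continuous_subtype_val)).abs
  have hbdd : BddAbove (Set.range fun u : Set.Icc a b => |f u.1 - f' u.1|) :=
    (isCompact_range hcont).bddAbove
  have hle : ∀ u ∈ Set.Icc a b, |f u - f' u| ≤ M := fun u hu =>
    le_ciSup hbdd (⟨u, hu⟩ : Set.Icc a b)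
  have hM0 : 0 ≤ M := le_trans (abs_nonneg _) (hle a ⟨le_refl a, hab'⟩)
  set A : ℝ := ∫ u in a..b, Real.exp (f u) with hAdef
  set B : ℝ := ∫ u in a..b, Real.exp (f' u) with hBdef
  have hintf : IntervalIntegrable (fun u => Real.exp (f u)) MeasureTheory.volume a b :=
    (Real.continuous_exp.comp hf).intervalIntegrable a b
  have hintf' : IntervalIntegrable (fun u => Real.exp (f' u)) MeasureTheory.volume a b :=
    (Real.continuous_exp.comp hf').intervalIntegrable a b
  have hA : 0 ≤ A :=
    intervalIntegral.integral_nonneg hab' (fun u _ => (Real.exp_pos _).le)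
  have hB : 0 ≤ B :=
    intervalIntegral.integral_nonneg hab' (fun u _ => (Real.exp_pos _).le)
  have comp1 : B ≤ Real.exp M * A := by
    have hmono : ∀ u ∈ Set.Icc a b, Real.exp (f' u) ≤ Real.exp M * Real.exp (f u) := by
      intro u hu
      rw [← Real.exp_add]
      apply Real.exp_le_exp.2
      have := hle u hu
      have := abs_le.1 this
      linarith [this.1, this.2, neg_abs_le (f u - f' u)]
    calc B ≤ ∫ u in a..b, Real.exp M * Real.exp (f u) :=
          intervalIntegral.integral_mono_on hab' hintf'
            (hintf.const_mul _) hmono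
      _ = Real.exp M * A := by rw [intervalIntegral.integral_const_mul]
  have comp2 : A ≤ Real.exp M * B := by
    have hmono : ∀ u ∈ Set.Icc a b, Real.exp (f u) ≤ Real.exp M * Real.exp (f' u) := by
      intro u hu
      rw [← Real.exp_add]
      apply Real.exp_le_exp.2
      have := abs_le.1 (hle u hu)
      linarith [this.1, this.2]
    calc A ≤ ∫ u in a..b, Real.exp M * Real.exp (f' u) :=
          intervalIntegral.integral_mono_on hab' hintf
            (hintf'.const_mul _) hmono
      _ = Real.exp M * B := by rw [intervalIntegral.integral_const_mul]
  rcases le_total A B with h | h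
  · exact bw_key A B M hA h comp1 hM0
  · rw [abs_sub_comm]
    exact bw_key B A M hB h comp2 hM0
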